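/- Fix n ≥ 1 and let ρ_GHZ := |GHZ_n⟩⟨GHZ_n| with |GHZ_n⟩ := (|0…0⟩ + |1…1⟩)/√2 ∈ (ℂ²)^{⊗n}. Then: (i) A_n(ρ_GHZ, ρ_GHZ) = (3^n + 2^n + 1)/2; (ii) B_{n,H}(ρ_GHZ, ρ_GHZ) = (5/8)(6/5)^n + (1/2)(4/5)^n + (3/4)(1/5)^n + (1/2)(−1/5)^n + (3/10)^n + (−3/10)^n; and (iii) A_n(ρ_GHZ, ρ_GHZ) · B_{n,H}(ρ_GHZ, ρ_GHZ) ≤ (18/5)^n. -/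

import Mathlib

open Matrix BigOperators
open scoped ComplexOrder

noncomputable section

abbrev QIdx (n : ℕ) := Fin n → Fin 2

def IsDensity {ι : Type*} [Fintype ι] [DecidableEq ι] (ρ : Matrix ι ι ℂ) : Prop :=
  ρ.PosSemidef ∧ ρ.trace = 1

/-- The operator on `(ℂ²)^{⊗k}` permuting the `k` tensor factors according to `π`. -/
def permOp {k : ℕ} (π : Equiv.Perm (Fin k)) : Matrix (Fin k → Fin 2) (Fin k → Fin 2) ℂ :=
  fun a b => if ∀ i, b i = a (π i) then 1 else 0

def pauliX : Matrix (Fin 2) (Fin 2) ℂ := !![0, 1; 1, 0]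
def pauliY : Matrix (Fin 2) (Fin 2) ℂ := !![0, -Complex.I; Complex.I, 0]
def pauliZ : Matrix (Fin 2) (Fin 2) ℂ := !![1, 0; 0, -1]

/-- `P^{⊗k}` on `(ℂ²)^{⊗k}`. -/
def pauliPow (k : ℕ) (P : Matrix (Fin 2) (Fin 2) ℂ) :
    Matrix (Fin k → Fin 2) (Fin k → Fin 2) ℂ :=
  fun a b => ∏ i, P (a i) (b i)

/-- The single-qubit Clifford fourth-moment operator `R_{4,Cl}` on `(ℂ²)^{⊗4}`. -/
def R4Cl : Matrix (Fin 4 → Fin 2) (Fin 4 → Fin 2) ℂ :=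
  -1 + ((1 : ℂ)/2) • (permOp (Equiv.swap 0 1) + permOp (Equiv.swap 2 3))
    + ((3 : ℂ)/4) • (1 + pauliPow 4 pauliX + pauliPow 4 pauliY + pauliPow 4 pauliZ)

/-- The single-qubit Haar fourth-moment operator `R_{4,H}` on `(ℂ²)^{⊗4}`. -/
def R4H : Matrix (Fin 4 → Fin 2) (Fin 4 → Fin 2) ℂ :=
  ((1 : ℂ)/5) • (1 + permOp (Equiv.swap 0 1) + permOp (Equiv.swap 2 3))
  + ((3 : ℂ)/5) • (permOp (Equiv.swap 0 1 * Equiv.swap 2 3)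
      + permOp (Equiv.swap 0 2 * Equiv.swap 1 3)
      + permOp (Equiv.swap 0 3 * Equiv.swap 1 2))
  - ((3 : ℂ)/10) • (permOp (Equiv.swap 0 2) + permOp (Equiv.swap 1 3)
      + permOp (Equiv.swap 0 3) + permOp (Equiv.swap 1 2))

/-- Per-qubit `n`-fold tensor power of an operator on `(ℂ²)^{⊗k}` (k replicas),
acting on `k` copies of `(ℂ²)^{⊗n}`. -/
def repPow (n : ℕ) {k : ℕ} (R : Matrix (Fin k → Fin 2) (Fin k → Fin 2) ℂ) :
    Matrix (Fin k → QIdx n) (Fin k → QIdx n) ℂ :=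
  fun a b => ∏ ℓ : Fin n, R (fun r => a r ℓ) (fun r => b r ℓ)

/-- The four-replica state `ρ ⊗ σ ⊗ ρ ⊗ σ`. -/
def rep4 {n : ℕ} (ρ σ : Matrix (QIdx n) (QIdx n) ℂ) :
    Matrix (Fin 4 → QIdx n) (Fin 4 → QIdx n) ℂ :=
  fun a b => ρ (a 0) (b 0) * σ (a 1) (b 1) * ρ (a 2) (b 2) * σ (a 3) (b 3)

/-- The pure state `|ψ⟩⟨ψ|`. -/
def pureState {ι : Type*} (ψ : ι → ℂ) : Matrix ι ι ℂ :=
  fun a b => ψ a * star (ψ b)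


/-- `ρ ⊗ σ` on `(ℂ²)^{⊗n} ⊗ (ℂ²)^{⊗n}`. -/
def kron2 {n : ℕ} (ρ σ : Matrix (QIdx n) (QIdx n) ℂ) :
    Matrix (QIdx n × QIdx n) (QIdx n × QIdx n) ℂ :=
  fun p q => ρ p.1 q.1 * σ p.2 q.2

/-- The partial swap `F_S` on `(ℂ²)^{⊗n} ⊗ (ℂ²)^{⊗n}`. -/
def partialSwap {n : ℕ} (S : Finset (Fin n)) :
    Matrix (QIdx n × QIdx n) (QIdx n × QIdx n) ℂ :=
  fun p q => if (∀ ℓ, if ℓ ∈ S then q.1 ℓ = p.2 ℓ ∧ q.2 ℓ = p.1 ℓ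
      else q.1 ℓ = p.1 ℓ ∧ q.2 ℓ = p.2 ℓ) then 1 else 0

/-- The second-moment coefficient `A_n(ρ,σ) = Σ_{S ⊆ [n]} 2^{n−|S|} tr[F_S(ρ⊗σ)]`. -/
def An {n : ℕ} (ρ σ : Matrix (QIdx n) (QIdx n) ℂ) : ℂ :=
  ∑ S : Finset (Fin n), (2 : ℂ)^(n - S.card) * Matrix.trace (partialSwap S * kron2 ρ σ)

/-- The Haar fourth-moment coefficient `B_{n,H}(ρ,σ) = tr[R_{4,H}^{⊗n}(ρ⊗σ⊗ρ⊗σ)]`. -/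
def BnH {n : ℕ} (ρ σ : Matrix (QIdx n) (QIdx n) ℂ) : ℂ :=
  Matrix.trace (repPow n R4H * rep4 ρ σ)

/-- The GHZ state `(|0…0⟩ + |1…1⟩)/√2` on `(ℂ²)^{⊗n}`. -/
def ghzVec (n : ℕ) : QIdx n → ℂ :=
  fun s => if s = (fun _ => 0) ∨ s = (fun _ => 1) then 1 / (Real.sqrt 2 : ℂ) else 0

/-!
The GHZ state is supported on the two constant strings `0…0` and `1…1`, and every entry of
`ρ_GHZ` between them equals `1/2`. On constant strings the per-qubit power `R^{⊗n}` acts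
entrywise, `R^{⊗n}(x…x, y…y) = R(x, y)^n`, so `B_{n,H} = 2⁻⁴ ∑_{u,v} R_{4,H}(u,v)^n`.
The matrix `10 R_{4,H}` has integer entries, and its `256` entries are `12, 8, 2, -2, 3, -3` with
multiplicities `10, 8, 12, 8, 16, 16`, the rest `0`. Likewise `tr[F_S(ρ ⊗ ρ)]` is the purity of
the marginal of `ρ_GHZ` on `S`: `1` if `S` is empty or everything and `1/2` otherwise, and
`∑_S 2^{n-|S|} = 3^n` gives `A_n`. For the product bound, `2^n + 1` and the alternating terms
are bounded crudely when `n ≥ 3`; `n = 1` (where equality holds) and `n = 2` are checked directly.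
-/

open Function Finset

lemma Fintype.sum_pi_eq_sum_comp_left {ι α β M : Type*} [Fintype ι] [DecidableEq ι]
    [Fintype α] [Fintype β] [AddCommMonoid M] {c : α → β} (hc : Injective c)
    (F : (ι → β) → M) (hF : ∀ b i, b i ∉ Set.range c → F b = 0) :
    ∑ b, F b = ∑ u, F (c ∘ u) := by
  refine (Fintype.sum_of_injective _ hc.comp_left _ F (fun b hb => ?_) fun _ => rfl).symm
  by_contra hb0
  have hrange : ∀ i, b i ∈ Set.range c := fun i => by_contra fun hi => hb0 (hF b i hi)
  choose u hu using hrange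
  exact hb ⟨u, funext hu⟩

section GHZ

variable {n : ℕ}

lemma ghzVec_const (x : Fin 2) : ghzVec n (const _ x) = 1 / √2 := by
  fin_cases x
  exacts [if_pos (Or.inl rfl), if_pos (Or.inr rfl)]

lemma ghzVec_eq_zero_of_notMem_range {s : QIdx n} (hs : s ∉ Set.range (const (Fin n))) :
    ghzVec n s = 0 :=
  if_neg <| by rintro (h | h) <;> exact hs ⟨_, h.symm⟩

lemma pureState_ghzVec_const (x y : Fin 2) :
    pureState (ghzVec n) (const _ x) (const _ y) = 1 / 2 := by
  have h : ((√2 : ℝ) : ℂ) * (√2 : ℝ) = 2 := by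
    rw [← Complex.ofReal_mul, Real.mul_self_sqrt zero_le_two, Complex.ofReal_ofNat]
  simp [pureState, ghzVec_const, Complex.conj_ofReal, ← h]

lemma pureState_ghzVec_eq_zero_left {a : QIdx n} (ha : a ∉ Set.range (const (Fin n)))
    (b : QIdx n) : pureState (ghzVec n) a b = 0 := by
  simp [pureState, ghzVec_eq_zero_of_notMem_range ha]

lemma pureState_ghzVec_eq_zero_right (a : QIdx n) {b : QIdx n}
    (hb : b ∉ Set.range (const (Fin n))) : pureState (ghzVec n) a b = 0 := by
  simp [pureState, ghzVec_eq_zero_of_notMem_range hb]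

end GHZ

section SecondMoment

variable {n : ℕ}

lemma trace_partialSwap_mul_kron2 (S : Finset (Fin n)) (ρ σ : Matrix (QIdx n) (QIdx n) ℂ) :
    trace (partialSwap S * kron2 ρ σ)
      = ∑ s, ∑ t, ρ (S.piecewise t s) s * σ (S.piecewise s t) t := by
  have hswap : ∀ p q : QIdx n × QIdx n, partialSwap S p q
      = if q = (S.piecewise p.2 p.1, S.piecewise p.1 p.2) then 1 else 0 := by
    intro p q
    refine if_congr ?_ rfl rfl
    simp only [Prod.ext_iff, funext_iff, Finset.piecewise, ← forall_and]
    exact forall_congr' fun ℓ => by split_ifs <;> rfl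
  simp only [trace, Matrix.diag, mul_apply, hswap, kron2, ite_mul, one_mul, zero_mul, sum_ite_eq',
    mem_univ, if_true, Fintype.sum_prod_type]

lemma piecewise_const_notMem_range {S : Finset (Fin n)} (hS₀ : S ≠ ∅) (hS : S ≠ univ)
    {x y : Fin 2} (hxy : x ≠ y) :
    S.piecewise (const _ y) (const _ x) ∉ Set.range (const (Fin n)) := by
  obtain ⟨i, hi⟩ := nonempty_iff_ne_empty.mpr hS₀
  obtain ⟨j, hj⟩ := not_forall.mp (mt eq_univ_iff_forall.mpr hS)
  rintro ⟨z, hz⟩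
  have hzi := congrFun hz i
  have hzj := congrFun hz j
  rw [piecewise_eq_of_mem _ _ _ hi] at hzi
  rw [piecewise_eq_of_notMem _ _ _ hj] at hzj
  exact hxy (hzj.symm.trans hzi)

lemma sum_two_pow_sub_card {R : Type*} [CommSemiring R] :
    ∑ S : Finset (Fin n), (2 : R) ^ (n - #S) = 3 ^ n := by
  have h := Fin.sum_pow_mul_eq_add_pow (n := n) (1 : R) 2
  norm_num at h
  exact h

variable [NeZero n]

lemma trace_partialSwap_mul_kron2_ghz (S : Finset (Fin n)) :
    trace (partialSwap S * kron2 (pureState (ghzVec n)) (pureState (ghzVec n)))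
      = if S = ∅ ∨ S = univ then 1 else 1 / 2 := by
  rw [trace_partialSwap_mul_kron2,
    ← Fintype.sum_of_injective _ const_injective _ _ (fun s hs => sum_eq_zero fun t _ =>
      mul_eq_zero_of_left (pureState_ghzVec_eq_zero_right _ hs) _) fun _ => rfl]
  simp_rw [← Fintype.sum_of_injective _ const_injective _ _ (fun t ht =>
      mul_eq_zero_of_right _ (pureState_ghzVec_eq_zero_right _ ht)) fun _ => rfl]
  split_ifs with hS
  · rcases hS with rfl | rfl <;>
      simp only [Fin.sum_univ_two, piecewise_empty, piecewise_univ, pureState_ghzVec_const] <;>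
      norm_num
  · rw [not_or] at hS
    simp only [Fin.sum_univ_two, pureState_ghzVec_const, piecewise_same, mul_zero,
      pureState_ghzVec_eq_zero_left (piecewise_const_notMem_range hS.1 hS.2 Fin.zero_ne_one),
      pureState_ghzVec_eq_zero_left (piecewise_const_notMem_range hS.1 hS.2 Fin.zero_ne_one.symm)]
    norm_num

lemma An_ghz :
    An (pureState (ghzVec n)) (pureState (ghzVec n)) = ((3 : ℂ) ^ n + 2 ^ n + 1) / 2 := by
  have hsplit : ∀ S : Finset (Fin n), (if S = ∅ ∨ S = univ then (1 : ℂ) else 1 / 2)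
      = 1 / 2 + ((if S = ∅ then 1 / 2 else 0) + (if S = univ then 1 / 2 else 0)) := by
    intro S
    have hne : (∅ : Finset (Fin n)) ≠ univ := univ_nonempty.ne_empty.symm
    by_cases h₀ : S = ∅ <;> by_cases h₁ : S = univ
    · exact absurd (h₀.symm.trans h₁) hne
    all_goals norm_num [h₀, h₁, hne, hne.symm]
  simp only [An, trace_partialSwap_mul_kron2_ghz, hsplit, mul_add, sum_add_distrib, mul_ite,
    mul_zero, sum_ite_eq', mem_univ, if_true, ← sum_mul, sum_two_pow_sub_card, card_empty,
    card_univ, Fintype.card_fin, Nat.sub_zero, Nat.sub_self, pow_zero]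
  ring

end SecondMoment

section FourthMoment

def permMatInt {k : ℕ} (π : Equiv.Perm (Fin k)) :
    Matrix (Fin k → Fin 2) (Fin k → Fin 2) ℤ :=
  fun a b => if ∀ i, b i = a (π i) then 1 else 0

def tenR4H : Matrix (Fin 4 → Fin 2) (Fin 4 → Fin 2) ℤ :=
  (2 : ℤ) • (1 + permMatInt (Equiv.swap 0 1) + permMatInt (Equiv.swap 2 3))
  + (6 : ℤ) • (permMatInt (Equiv.swap 0 1 * Equiv.swap 2 3)
      + permMatInt (Equiv.swap 0 2 * Equiv.swap 1 3)
      + permMatInt (Equiv.swap 0 3 * Equiv.swap 1 2))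
  - (3 : ℤ) • (permMatInt (Equiv.swap 0 2) + permMatInt (Equiv.swap 1 3)
      + permMatInt (Equiv.swap 0 3) + permMatInt (Equiv.swap 1 2))

lemma permOp_eq_map_permMatInt {k : ℕ} (π : Equiv.Perm (Fin k)) :
    permOp π = (permMatInt π).map (↑) := by
  ext a b
  simp only [permOp, permMatInt, Matrix.map_apply]
  split_ifs <;> simp

lemma R4H_eq_smul_tenR4H : R4H = (10 : ℂ)⁻¹ • tenR4H.map (↑) := by
  ext u v
  simp only [R4H, tenR4H, permOp_eq_map_permMatInt, Matrix.map_apply, Matrix.add_apply,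
    Matrix.sub_apply, Matrix.smul_apply, Matrix.one_apply, smul_eq_mul]
  push_cast
  split_ifs <;> ring

set_option maxRecDepth 100000 in
lemma tenR4H_entries :
    univ.val.map (fun p : (Fin 4 → Fin 2) × (Fin 4 → Fin 2) => tenR4H p.1 p.2)
      = Multiset.replicate 10 12 + Multiset.replicate 8 8 + Multiset.replicate 12 2
        + Multiset.replicate 8 (-2) + Multiset.replicate 16 3 + Multiset.replicate 16 (-3)
        + Multiset.replicate 186 0 := by
  decide

variable {n : ℕ}

lemma sum_R4H_pow (hn : n ≠ 0) :
    ∑ u, ∑ v, R4H u v ^ n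
      = 10 * ((6 : ℂ) / 5) ^ n + 8 * ((4 : ℂ) / 5) ^ n + 12 * ((1 : ℂ) / 5) ^ n
        + 8 * (-(1 : ℂ) / 5) ^ n + 16 * ((3 : ℂ) / 10) ^ n + 16 * (-(3 : ℂ) / 10) ^ n := by
  calc ∑ u, ∑ v, R4H u v ^ n
      = ((univ.val.map fun p : (Fin 4 → Fin 2) × (Fin 4 → Fin 2) => tenR4H p.1 p.2).map
          fun z : ℤ => ((10 : ℂ)⁻¹ * z) ^ n).sum := by
        rw [Multiset.map_map, ← Fintype.sum_prod_type', R4H_eq_smul_tenR4H]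
        rfl
    _ = _ := by
        rw [tenR4H_entries]
        simp only [Multiset.map_add, Multiset.map_replicate, Multiset.sum_add,
          Multiset.sum_replicate, nsmul_eq_mul, Int.cast_zero, mul_zero, zero_pow hn]
        norm_num

lemma repPow_comp_const {k : ℕ} (R : Matrix (Fin k → Fin 2) (Fin k → Fin 2) ℂ)
    (u v : Fin k → Fin 2) : repPow n R (const _ ∘ u) (const _ ∘ v) = R u v ^ n := by
  simp [repPow]

lemma rep4_self (ρ : Matrix (QIdx n) (QIdx n) ℂ) (a b : Fin 4 → QIdx n) :
    rep4 ρ ρ a b = ∏ r, ρ (a r) (b r) := by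
  simp [rep4, Fin.prod_univ_four]

lemma BnH_ghz_eq_sum [NeZero n] :
    BnH (pureState (ghzVec n)) (pureState (ghzVec n)) = (∑ u, ∑ v, R4H u v ^ n) / 16 := by
  have hc : Injective (const (Fin n) : Fin 2 → QIdx n) := const_injective
  simp only [BnH, trace, Matrix.diag, mul_apply, rep4_self]
  have hvanish : ∀ (a b : Fin 4 → QIdx n) (i : Fin 4),
      a i ∉ Set.range (const (Fin n)) ∨ b i ∉ Set.range (const (Fin n)) →
        ∏ r, pureState (ghzVec n) (b r) (a r) = 0 := fun a b i h =>
    prod_eq_zero (mem_univ i)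
      (h.elim (pureState_ghzVec_eq_zero_right _) (pureState_ghzVec_eq_zero_left · _))
  refine (Fintype.sum_pi_eq_sum_comp_left hc _ fun a i ha => sum_eq_zero fun b _ =>
    mul_eq_zero_of_right _ (hvanish a b i (.inl ha))).trans ?_
  refine (sum_congr rfl fun u _ => Fintype.sum_pi_eq_sum_comp_left hc _ fun b i hb =>
    mul_eq_zero_of_right _ (hvanish _ b i (.inr hb))).trans ?_
  simp only [Function.comp_apply, pureState_ghzVec_const, repPow_comp_const, prod_const, card_univ,
    Fintype.card_fin, sum_div]
  norm_num [div_eq_mul_inv]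

lemma BnH_ghz [NeZero n] :
    BnH (pureState (ghzVec n)) (pureState (ghzVec n))
      = ((5 : ℂ)/8) * ((6 : ℂ)/5)^n + ((1 : ℂ)/2) * ((4 : ℂ)/5)^n
        + ((3 : ℂ)/4) * ((1 : ℂ)/5)^n + ((1 : ℂ)/2) * (-(1 : ℂ)/5)^n
        + ((3 : ℂ)/10)^n + (-(3 : ℂ)/10)^n := by
  rw [BnH_ghz_eq_sum, sum_R4H_pow (NeZero.ne n)]
  ring

end FourthMoment

lemma mul_pow_le_pow_mul_pow {R : Type*} [CommSemiring R] [PartialOrder R] [IsOrderedRing R]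
    {m n : ℕ} (hmn : m ≤ n) {r q : R} (hr₀ : 0 ≤ r) (hr₁ : r ≤ 1) (hq : 0 ≤ q) :
    (r * q) ^ n ≤ r ^ m * q ^ n := by
  rw [mul_pow]
  exact mul_le_mul_of_nonneg_right (pow_le_pow_of_le_one hr₀ hr₁ hmn) (pow_nonneg hq n)

lemma neg_pow_le_pow {R : Type*} [Ring R] [LinearOrder R] [IsOrderedRing R] {x : R}
    (hx : 0 ≤ x) (n : ℕ) : (-x) ^ n ≤ x ^ n :=
  calc (-x) ^ n ≤ |(-x) ^ n| := le_abs_self _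
    _ = x ^ n := by rw [abs_pow, abs_neg, abs_of_nonneg hx]

lemma ghz_moment_product_le {n : ℕ} (hn : n ≠ 0) :
    ((3 : ℝ) ^ n + 2 ^ n + 1) / 2
        * (5 / 8 * (6 / 5) ^ n + 1 / 2 * (4 / 5) ^ n + 3 / 4 * (1 / 5) ^ n
          + 1 / 2 * (-1 / 5) ^ n + (3 / 10) ^ n + (-3 / 10) ^ n)
      ≤ (18 / 5) ^ n := by
  obtain rfl | rfl | hn : n = 1 ∨ n = 2 ∨ 3 ≤ n := by omega
  · norm_num
  · norm_num
  have shrink : ∀ r q : ℝ, 0 ≤ r → r ≤ 1 → 0 ≤ q → (r * q) ^ n ≤ r ^ 3 * q ^ n :=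
    fun _ _ => mul_pow_le_pow_mul_pow hn
  have h₂ := shrink (2 / 3) 3 (by norm_num) (by norm_num) (by norm_num)
  have h₁ := shrink (1 / 3) 3 (by norm_num) (by norm_num) (by norm_num)
  have h₁₂ := shrink (2 / 3) (18 / 5) (by norm_num) (by norm_num) (by norm_num)
  have h₃ := shrink (1 / 6) (18 / 5) (by norm_num) (by norm_num) (by norm_num)
  have h₉ := shrink (1 / 4) (18 / 5) (by norm_num) (by norm_num) (by norm_num)
  norm_num at h₂ h₁ h₁₂ h₃ h₉
  have hA : ((3 : ℝ) ^ n + 2 ^ n + 1) / 2 ≤ 2 / 3 * 3 ^ n := by linarith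
  have hB : 5 / 8 * (6 / 5) ^ n + 1 / 2 * (4 / 5) ^ n + 3 / 4 * (1 / 5) ^ n
          + 1 / 2 * (-1 / 5) ^ n + (3 / 10) ^ n + (-3 / 10) ^ n
        ≤ 5 / 8 * (6 / 5 : ℝ) ^ n + 1 / 2 * (4 / 5) ^ n + 5 / 4 * (1 / 5) ^ n
          + 2 * (3 / 10) ^ n := by
    have h₅ := neg_pow_le_pow (x := (1 / 5 : ℝ)) (by norm_num) n
    have h₁₀ := neg_pow_le_pow (x := (3 / 10 : ℝ)) (by norm_num) n
    rw [← neg_div] at h₅ h₁₀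
    linarith
  have merge : ∀ a b : ℝ, a ^ n * b ^ n = (a * b) ^ n := fun a b => (mul_pow a b n).symm
  have e₆ := merge 3 (6 / 5)
  have e₄ := merge 3 (4 / 5)
  have e₁ := merge 3 (1 / 5)
  have e₃ := merge 3 (3 / 10)
  norm_num at e₆ e₄ e₁ e₃
  refine (mul_le_mul_of_nonneg hA hB (by positivity) (by positivity)).trans ?_
  linarith [pow_nonneg (by norm_num : (0 : ℝ) ≤ 18 / 5) n]

/-- For the GHZ state: (i) `A_n = (3^n + 2^n + 1)/2`;
(ii) `B_{n,H} = (5/8)(6/5)^n + (1/2)(4/5)^n + (3/4)(1/5)^n + (1/2)(−1/5)^n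
 + (3/10)^n + (−3/10)^n`; (iii) `A_n · B_{n,H} ≤ (18/5)^n`. -/
theorem ghz_certificate (n : ℕ) (hn : 1 ≤ n) :
    An (pureState (ghzVec n)) (pureState (ghzVec n))
      = ((3 : ℂ)^n + 2^n + 1)/2 ∧
    BnH (pureState (ghzVec n)) (pureState (ghzVec n))
      = ((5 : ℂ)/8) * ((6 : ℂ)/5)^n + ((1 : ℂ)/2) * ((4 : ℂ)/5)^n
        + ((3 : ℂ)/4) * ((1 : ℂ)/5)^n + ((1 : ℂ)/2) * (-(1 : ℂ)/5)^n
        + ((3 : ℂ)/10)^n + (-(3 : ℂ)/10)^n ∧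
    An (pureState (ghzVec n)) (pureState (ghzVec n))
        * BnH (pureState (ghzVec n)) (pureState (ghzVec n))
      ≤ ((18 : ℂ)/5)^n := by
  have : NeZero n := ⟨by omega⟩
  refine ⟨An_ghz, BnH_ghz, ?_⟩
  rw [An_ghz, BnH_ghz]
  have h := Complex.real_le_real.mpr (ghz_moment_product_le (n := n) (by omega))
  push_cast at h
  exact h
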